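/- Let γ ≥ 2 + π/2 and define x̄ : ℝ → ℝ by x̄(t) = 1/2 + π/(4γ) + √(1/2 − 1/γ − (π/(2γ²))·(1 + π/4)) · sin(πt/2). Then x̄ satisfies the renewal equation with quadratic nonlinearity for all t ∈ ℝ: x̄(t) = (γ/2)·∫_{−3}^{−1} x̄(t+θ)·(1 − x̄(t+θ)) dθ. -/
import Mathlib


open Real

/-- The explicit periodic function `x̄` is a solution of the renewal equation with quadratic
nonlinearity `x(t) = (γ/2) ∫_{-3}^{-1} x(t+θ)(1 - x(t+θ)) dθ` for `γ ≥ 2 + π/2`. -/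
theorem quadratic_RE_periodic_solution (γ : ℝ) (hγ : 2 + π / 2 ≤ γ)
    (x : ℝ → ℝ)
    (hx : ∀ t : ℝ, x t =
      1 / 2 + π / (4 * γ) +
        Real.sqrt (1 / 2 - 1 / γ - (π / (2 * γ ^ 2)) * (1 + π / 4)) * Real.sin (π * t / 2)) :
    ∀ t : ℝ, x t = (γ / 2) * ∫ θ in (-3 : ℝ)..(-1 : ℝ), x (t + θ) * (1 - x (t + θ)) := by
  have hπ : (0:ℝ) < π := Real.pi_pos
  have hγ0 : (0:ℝ) < γ := by nlinarith
  intro t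
  simp only [hx]
  set A : ℝ := 1 / 2 + π / (4 * γ) with hA
  set D : ℝ := 1 / 2 - 1 / γ - π / (2 * γ ^ 2) * (1 + π / 4) with hD
  have hDnn : 0 ≤ D := by
    have key : D = (γ - (2 + π / 2)) * (γ + π / 2) / (2 * γ ^ 2) := by
      rw [hD]; field_simp; ring
    rw [key]
    apply div_nonneg
    · apply mul_nonneg <;> nlinarith
    · positivity
  set B : ℝ := Real.sqrt D with hB
  have hB2 : B ^ 2 = D := Real.sq_sqrt hDnn
  -- antiderivative
  set F : ℝ → ℝ := fun θ => A * (1 - A) * θ - (2 * B * (1 - 2 * A) / π) * Real.cos (π * (t + θ) / 2)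
      - B ^ 2 * (θ / 2 - Real.sin (π * (t + θ)) / (2 * π)) with hF
  have hderiv : ∀ u ∈ Set.uIcc (-3 : ℝ) (-1 : ℝ),
      HasDerivAt F ((A + B * Real.sin (π * (t + u) / 2)) *
        (1 - (A + B * Real.sin (π * (t + u) / 2)))) u := by
    intro u _
    have h1 : HasDerivAt (fun θ : ℝ => π * (t + θ) / 2) (π / 2) u := by
      have := (((hasDerivAt_id u).const_add t).const_mul π).div_const 2
      simpa using this
    have h2 : HasDerivAt (fun θ : ℝ => π * (t + θ)) π u := by
      have := ((hasDerivAt_id u).const_add t).const_mul π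
      simpa using this
    have hc : HasDerivAt (fun θ : ℝ => Real.cos (π * (t + θ) / 2))
        (-Real.sin (π * (t + u) / 2) * (π / 2)) u := h1.cos
    have hs : HasDerivAt (fun θ : ℝ => Real.sin (π * (t + θ)))
        (Real.cos (π * (t + u)) * π) u := h2.sin
    have hmain : HasDerivAt F
        (A * (1 - A) * 1 - (2 * B * (1 - 2 * A) / π) * (-Real.sin (π * (t + u) / 2) * (π / 2))
          - B ^ 2 * (1 / 2 - Real.cos (π * (t + u)) * π / (2 * π))) u := by
      exact (((hasDerivAt_id u).const_mul (A * (1 - A))).sub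
        (hc.const_mul (2 * B * (1 - 2 * A) / π))).sub
        (((hasDerivAt_id u).div_const 2 |>.sub (hs.div_const (2 * π))).const_mul (B ^ 2))
    convert hmain using 1
    have hcd : Real.cos (π * (t + u)) = 1 - 2 * Real.sin (π * (t + u) / 2) ^ 2 := by
      have h2m := Real.cos_two_mul (π * (t + u) / 2)
      rw [show (2:ℝ) * (π * (t + u) / 2) = π * (t + u) by ring] at h2m
      have hp := Real.sin_sq_add_cos_sq (π * (t + u) / 2)
      linear_combination h2m + 2 * hp
    rw [hcd]
    field_simp
    ring
  have hint : IntervalIntegrable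
      (fun θ => (A + B * Real.sin (π * (t + θ) / 2)) *
        (1 - (A + B * Real.sin (π * (t + θ) / 2)))) MeasureTheory.volume (-3 : ℝ) (-1 : ℝ) := by
    apply Continuous.intervalIntegrable
    fun_prop
  have hval := intervalIntegral.integral_eq_sub_of_hasDerivAt hderiv hint
  rw [hval]
  rw [hF]
  simp only
  have e1 : π * (t + (-1 : ℝ)) / 2 = π * t / 2 - π / 2 := by ring
  have e2 : π * (t + (-3 : ℝ)) / 2 = (π * t / 2 - π / 2) - π := by ring
  have e3 : π * (t + (-1 : ℝ)) = π * t - π := by ring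
  have e4 : π * (t + (-3 : ℝ)) = (π * t - π) - 2 * π := by ring
  rw [e1, e2, e3, e4, Real.cos_sub_pi, Real.cos_sub_pi_div_two, Real.sin_sub_two_pi,
    Real.sin_sub_pi]
  rw [hB2, hD, hA]
  field_simp
  ring
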